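/- arXiv:2005.13991 — 3 statements merged into one kernel-verified Lean document; each statement's English description precedes it below -/
import Mathlib

section
/- Let m be a positive integer, let B : ℝ^{2m} → Mat_{2m×2m}(ℝ) be a continuous map such that B(x) is skew-symmetric for every x, and let H : ℝ^{2m} → ℝ be continuously differentiable. If Y₁, Y₂ ∈ ℝ^{2m} and h ∈ ℝ satisfy the implicit relation Y₂ = Y₁ + h · B((Y₁+Y₂)/2) · ∫₀¹ ∇H(Y₁ + θ(Y₂−Y₁)) dθ, then H(Y₂) = H(Y₁). That is, the deterministic averaged-gradient midpoint step exactly preserves the Hamiltonian of any Poisson system. -/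
open Matrix

open scoped RealInnerProductSpace

theorem Matrix.dotProduct_mulVec_self_eq_zero_of_transpose_eq_neg {n R : Type*} [Fintype n]
    [CommRing R] [NoZeroDivisors R] [CharZero R] {A : Matrix n n R} (hA : Aᵀ = -A)
    (v : n → R) : v ⬝ᵥ A *ᵥ v = 0 := by
  refine CharZero.eq_neg_self_iff.mp ?_
  conv_lhs => rw [dotProduct_mulVec, ← mulVec_transpose, hA, neg_mulVec, neg_dotProduct,
    dotProduct_comm]

theorem Matrix.inner_toEuclideanLin_self_eq_zero_of_transpose_eq_neg {n : Type*} [Fintype n]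
    [DecidableEq n] {A : Matrix n n ℝ} (hA : Aᵀ = -A) (v : EuclideanSpace ℝ n) :
    ⟪v, toEuclideanLin A v⟫ = 0 := by
  rw [← dotProduct_mulVec_self_eq_zero_of_transpose_eq_neg hA v.ofLp, ← inner_toEuclideanCLM]
  rfl

section MeanValue

variable {E : Type*} [NormedAddCommGroup E] [InnerProductSpace ℝ E] [CompleteSpace E]

theorem ContDiff.continuous_gradient {H : E → ℝ} (hH : ContDiff ℝ 1 H) :
    Continuous (gradient H) :=
  (InnerProductSpace.toDual ℝ E).symm.continuous.comp (hH.continuous_fderiv one_ne_zero)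

theorem ContDiff.sub_eq_inner_intervalIntegral_gradient {H : E → ℝ} (hH : ContDiff ℝ 1 H)
    (x y : E) : H y - H x = ⟪∫ θ in (0 : ℝ)..1, gradient H (x + θ • (y - x)), y - x⟫ := by
  set γ : ℝ → E := fun θ => x + θ • (y - x)
  have hγ : ∀ θ, HasDerivAt γ (y - x) θ := fun θ => by
    simpa only [one_smul] using ((hasDerivAt_id' θ).smul_const (y - x)).const_add x
  have hcont : Continuous fun θ => gradient H (γ θ) :=
    hH.continuous_gradient.comp (continuous_iff_continuousAt.mpr (hγ · |>.continuousAt))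
  have hderiv : ∀ θ ∈ Set.uIcc (0 : ℝ) 1, HasDerivAt (H ∘ γ) ⟪gradient H (γ θ), y - x⟫ θ :=
    fun θ _ =>
      (hH.differentiable one_ne_zero (γ θ)).hasGradientAt.hasFDerivAt.comp_hasDerivAt θ (hγ θ)
  have hswap : ∫ θ in (0 : ℝ)..1, ⟪gradient H (γ θ), y - x⟫ =
      ⟪∫ θ in (0 : ℝ)..1, gradient H (γ θ), y - x⟫ :=
    ((innerSL ℝ (E := E)).flip (y - x)).intervalIntegral_comp_comm (hcont.intervalIntegrable 0 1)
  rw [← hswap, intervalIntegral.integral_eq_sub_of_hasDerivAt hderiv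
    ((hcont.inner continuous_const).intervalIntegrable 0 1)]
  simp [γ]

end MeanValue

theorem drift_preserving_midstep_preserves_energy_general
    (m : ℕ)
    (B : EuclideanSpace ℝ (Fin (2 * m)) → Matrix (Fin (2 * m)) (Fin (2 * m)) ℝ)
    (hBskew : ∀ x, (B x)ᵀ = -(B x))
    (H : EuclideanSpace ℝ (Fin (2 * m)) → ℝ)
    (hH : ContDiff ℝ 1 H)
    (h : ℝ) (Y₁ Y₂ : EuclideanSpace ℝ (Fin (2 * m)))
    (hrel : Y₂ = Y₁ + h • (Matrix.toEuclideanLin (B ((2 : ℝ)⁻¹ • (Y₁ + Y₂))))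
        (∫ θ in (0 : ℝ)..1, gradient H (Y₁ + θ • (Y₂ - Y₁)))) :
    H Y₂ = H Y₁ := by
  set v := ∫ θ in (0 : ℝ)..1, gradient H (Y₁ + θ • (Y₂ - Y₁))
  set A := toEuclideanLin (B ((2 : ℝ)⁻¹ • (Y₁ + Y₂)))
  have hstep : Y₂ - Y₁ = h • A v := sub_eq_iff_eq_add'.mpr hrel
  refine sub_eq_zero.mp ?_
  calc H Y₂ - H Y₁ = ⟪v, Y₂ - Y₁⟫ := hH.sub_eq_inner_intervalIntegral_gradient Y₁ Y₂
    _ = h * ⟪v, A v⟫ := by rw [hstep, real_inner_smul_right]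
    _ = 0 := by rw [inner_toEuclideanLin_self_eq_zero_of_transpose_eq_neg (hBskew _), mul_zero]

/-- The deterministic averaged-gradient midpoint step
`Y₂ = Y₁ + h B((Y₁+Y₂)/2) ∫₀¹ ∇H(Y₁+θ(Y₂−Y₁)) dθ` exactly preserves the
Hamiltonian `H` of any Poisson system with skew-symmetric structure matrix `B`. -/
theorem drift_preserving_midstep_preserves_energy
    (m : ℕ) (hm : 0 < m)
    (B : EuclideanSpace ℝ (Fin (2 * m)) → Matrix (Fin (2 * m)) (Fin (2 * m)) ℝ)
    (hBcont : Continuous B)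
    (hBskew : ∀ x, (B x)ᵀ = -(B x))
    (H : EuclideanSpace ℝ (Fin (2 * m)) → ℝ)
    (hH : ContDiff ℝ 1 H)
    (h : ℝ) (Y₁ Y₂ : EuclideanSpace ℝ (Fin (2 * m)))
    (hrel : Y₂ = Y₁ + h • (Matrix.toEuclideanLin (B ((2 : ℝ)⁻¹ • (Y₁ + Y₂))))
        (∫ θ in (0 : ℝ)..1, gradient H (Y₁ + θ • (Y₂ - Y₁)))) :
    H Y₂ = H Y₁ :=
  drift_preserving_midstep_preserves_energy_general m B hBskew H hH h Y₁ Y₂ hrel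
end

section
/- Let m be a positive integer, B : ℝ^{2m} → Mat_{2m×2m}(ℝ) a continuous skew-symmetric-matrix-valued map, H : ℝ^{2m} → ℝ continuously differentiable, and A ∈ Mat_{2m×2m}(ℝ) a symmetric matrix such that the quadratic function C(x) = ½ xᵀ A x is a Casimir, i.e. (A x)ᵀ B(x) = 0 (as a row vector) for all x ∈ ℝ^{2m}. If Y₁, Y₂ ∈ ℝ^{2m} and h ∈ ℝ satisfy Y₂ = Y₁ + h · B((Y₁+Y₂)/2) · ∫₀¹ ∇H(Y₁ + θ(Y₂−Y₁)) dθ, then C(Y₂) = C(Y₁). -/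
open Matrix
open scoped RealInnerProductSpace

/-!
`C(Y₂) - C(Y₁) = ½ ⟪Y₂ - Y₁, A (Y₁ + Y₂)⟫` because `A` is symmetric. The increment `Y₂ - Y₁` lies in
the range of `B` at the midpoint `x₀ = (Y₁ + Y₂)/2`, while `A (Y₁ + Y₂) = 2 A x₀` is orthogonal to that
range by the Casimir condition at `x₀`. Whatever the averaged gradient is, the difference vanishes.
-/

theorem LinearMap.IsSymmetric.inner_map_self_sub_inner_map_self {E : Type*}
    [NormedAddCommGroup E] [InnerProductSpace ℝ E] {T : E →ₗ[ℝ] E} (hT : T.IsSymmetric) (x y : E) :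
    ⟪y, T y⟫ - ⟪x, T x⟫ = ⟪y - x, T (x + y)⟫ := by
  have hcross : ⟪y, T x⟫ = ⟪x, T y⟫ := by rw [← hT y x, real_inner_comm]
  rw [map_add, inner_sub_left, inner_add_right, inner_add_right, hcross]
  ring

theorem Matrix.inner_toEuclideanLin_left {m n : Type*} [Fintype m] [Fintype n] [DecidableEq n]
    (M : Matrix m n ℝ) (u : EuclideanSpace ℝ m) (v : EuclideanSpace ℝ n) :
    ⟪toEuclideanLin M v, u⟫ = (u.ofLp ᵥ* M) ⬝ᵥ v.ofLp := by
  rw [real_inner_comm, EuclideanSpace.inner_eq_star_dotProduct, ofLp_toLpLin, toLin'_apply,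
    star_trivial, dotProduct_comm, dotProduct_mulVec]

theorem drift_preserving_midstep_preserves_quadratic_casimir_general
    (m : ℕ)
    (B : EuclideanSpace ℝ (Fin (2 * m)) → Matrix (Fin (2 * m)) (Fin (2 * m)) ℝ)
    (H : EuclideanSpace ℝ (Fin (2 * m)) → ℝ)
    (A : Matrix (Fin (2 * m)) (Fin (2 * m)) ℝ)
    (hA : A.IsSymm)
    (hCasimir : ∀ x : EuclideanSpace ℝ (Fin (2 * m)),
      Matrix.vecMul (WithLp.equiv 2 (Fin (2 * m) → ℝ) (Matrix.toEuclideanLin A x)) (B x) = 0)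
    (h : ℝ) (Y₁ Y₂ : EuclideanSpace ℝ (Fin (2 * m)))
    (hrel : Y₂ = Y₁ + h • (Matrix.toEuclideanLin (B ((2 : ℝ)⁻¹ • (Y₁ + Y₂))))
        (∫ θ in (0 : ℝ)..1, gradient H (Y₁ + θ • (Y₂ - Y₁)))) :
    (1 / 2 : ℝ) * ⟪Y₂, Matrix.toEuclideanLin A Y₂⟫
      = (1 / 2 : ℝ) * ⟪Y₁, Matrix.toEuclideanLin A Y₁⟫ := by
  set x₀ := (2 : ℝ)⁻¹ • (Y₁ + Y₂)
  set v := ∫ θ in (0 : ℝ)..1, gradient H (Y₁ + θ • (Y₂ - Y₁))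
  have hsym : (toEuclideanLin A).IsSymmetric :=
    isSymmetric_toEuclideanLin_iff.mpr (isHermitian_iff_isSymm.mpr hA)
  have hstep : Y₂ - Y₁ = h • toEuclideanLin (B x₀) v := by
    rw [sub_eq_iff_eq_add']
    exact hrel
  have hmid : Y₁ + Y₂ = (2 : ℝ) • x₀ := by
    rw [smul_inv_smul₀ two_ne_zero]
  have horth : ⟪toEuclideanLin (B x₀) v, toEuclideanLin A x₀⟫ = 0 := by
    rw [inner_toEuclideanLin_left, ← WithLp.equiv_apply, hCasimir x₀, zero_dotProduct]
  congr 1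
  rw [← sub_eq_zero, hsym.inner_map_self_sub_inner_map_self, hstep, hmid, map_smul,
    inner_smul_left, inner_smul_right, horth, mul_zero, mul_zero]

/-- The deterministic averaged-gradient midpoint step exactly preserves
any quadratic Casimir `C(x) = ½ xᵀ A x` (with `A` symmetric and `(Ax)ᵀ B(x) = 0` for all `x`)
of the Poisson system with skew-symmetric structure matrix `B`. -/
theorem drift_preserving_midstep_preserves_quadratic_casimir
    (m : ℕ) (hm : 0 < m)
    (B : EuclideanSpace ℝ (Fin (2 * m)) → Matrix (Fin (2 * m)) (Fin (2 * m)) ℝ)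
    (hBcont : Continuous B)
    (hBskew : ∀ x, (B x)ᵀ = -(B x))
    (H : EuclideanSpace ℝ (Fin (2 * m)) → ℝ)
    (hH : ContDiff ℝ 1 H)
    (A : Matrix (Fin (2 * m)) (Fin (2 * m)) ℝ)
    (hA : A.IsSymm)
    (hCasimir : ∀ x : EuclideanSpace ℝ (Fin (2 * m)),
      Matrix.vecMul (WithLp.equiv 2 (Fin (2 * m) → ℝ) (Matrix.toEuclideanLin A x)) (B x) = 0)
    (h : ℝ) (Y₁ Y₂ : EuclideanSpace ℝ (Fin (2 * m)))
    (hrel : Y₂ = Y₁ + h • (Matrix.toEuclideanLin (B ((2 : ℝ)⁻¹ • (Y₁ + Y₂))))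
        (∫ θ in (0 : ℝ)..1, gradient H (Y₁ + θ • (Y₂ - Y₁)))) :
    (1 / 2 : ℝ) * ⟪Y₂, Matrix.toEuclideanLin A Y₂⟫
      = (1 / 2 : ℝ) * ⟪Y₁, Matrix.toEuclideanLin A Y₁⟫ :=
  drift_preserving_midstep_preserves_quadratic_casimir_general m B H A hA hCasimir h Y₁ Y₂ hrel
end

section
/- Let m, d be positive integers, h > 0, Σ ∈ Mat_{m×d}(ℝ), B : ℝ^{2m} → Mat_{2m×2m}(ℝ) continuous with B(x) skew-symmetric for every x, V : ℝᵐ → ℝ of class C¹, H(p,q) = ½|p|² + V(q), and let A ∈ Mat_{2m×2m}(ℝ) be symmetric with upper-left m×m block a, such that C(x) = ½ xᵀ A x satisfies (A x)ᵀ B(x) = 0 for all x (C is a Casimir). Let (X_n), (Y₁ⁿ), (Y₂ⁿ), (ξ_n), (η_n) be as in the drift-preserving scheme: almost surely Y₁ⁿ = X_n + (Σξ_n, 0), Y₂ⁿ = Y₁ⁿ + h B((Y₁ⁿ+Y₂ⁿ)/2) ∫₀¹ ∇H(Y₁ⁿ+θ(Y₂ⁿ−Y₁ⁿ)) dθ,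 X_{n+1} = Y₂ⁿ + (Ση_n, 0), with ξ_n, η_n iid N(0,(h/2)·Id_d), ξ_n independent of X_n, η_n independent of (X_n, ξ_n, Y₂ⁿ), and E[|X_n|²], E[|Y₂ⁿ|²] < ∞ for all n. Then for every n ∈ ℕ, E[C(X_n)] = E[C(X₀)] + (1/2)·Tr(Σᵀ a Σ)·t_n, where t_n = n h. (Trace formula for the quadratic Casimir of the drift-preserving scheme.) -/
open Matrix MeasureTheory ProbabilityTheory
open scoped RealInnerProductSpace

/-- An `ℝᵈ`-valued random vector is centered Gaussian with covariance `s·Id_d`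
iff every linear functional `⟨t, ·⟩` of it is a real Gaussian `N(0, s‖t‖²)`. -/
def IsCenteredGaussianVec {Ω : Type*} [MeasurableSpace Ω] (μ : Measure Ω)
    (d : ℕ) (s : ℝ) (ξ : Ω → EuclideanSpace ℝ (Fin d)) : Prop :=
  Measurable ξ ∧ ∀ t : EuclideanSpace ℝ (Fin d),
    Measure.map (fun ω => ⟪t, ξ ω⟫) μ = gaussianReal 0 (Real.toNNReal (s * ‖t‖ ^ 2))

/-- The vector `(v, 0) ∈ ℝᵐ × ℝᵐ ≅ ℝ^{2m}` whose first `m` components are `v`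
and last `m` components vanish. -/
noncomputable def pad (m : ℕ) (v : EuclideanSpace ℝ (Fin m)) :
    EuclideanSpace ℝ (Fin (m + m)) :=
  (WithLp.equiv 2 (Fin (m + m) → ℝ)).symm
    (Fin.append (WithLp.equiv 2 (Fin m → ℝ) v) 0)

/-- The separable Hamiltonian `H(p,q) = ½ ∑ⱼ pⱼ² + V(q)` on `ℝᵐ × ℝᵐ ≅ ℝ^{2m}`. -/
noncomputable def Ham (m : ℕ) (V : EuclideanSpace ℝ (Fin m) → ℝ)
    (x : EuclideanSpace ℝ (Fin (m + m))) : ℝ :=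
  (1 / 2 : ℝ) * ∑ j : Fin m, x (Fin.castAdd m j) ^ 2
    + V ((WithLp.equiv 2 (Fin m → ℝ)).symm fun j => x (Fin.natAdd m j))

/-- The quadratic function `C(x) = ½ xᵀ A x`. -/
noncomputable def quadCas (m : ℕ) (A : Matrix (Fin (m + m)) (Fin (m + m)) ℝ)
    (x : EuclideanSpace ℝ (Fin (m + m))) : ℝ :=
  (1 / 2 : ℝ) * ⟪x, Matrix.toEuclideanLin A x⟫

/-!
A kick `x ↦ x + P ζ` by a centered Gaussian `ζ` with covariance `s·Id`, independent of `x`, raises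
the mean of the quadratic form `⟪x, A x⟫` by exactly `E⟪Pζ, A Pζ⟫ = s · Tr(Pᵀ A P)`: the cross
term `2⟪Pᵀ A x, ζ⟫` has mean zero by independence. The midpoint step, on the other hand, leaves
`C` unchanged pathwise: for symmetric `A`, `C(Y₂) - C(Y₁) = ⟪A (Y₁ + Y₂)/2, Y₂ - Y₁⟫`, and
`Y₂ - Y₁` lies in the range of `B` at the midpoint, which the Casimir condition makes orthogonal to
`A (Y₁ + Y₂)/2`. Each step consists of two kicks with `s = h/2` and `P = (Σ; 0)`, and this `P`
picks out the upper-left block: `Pᵀ A P = Σᵀ a Σ`.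
-/

namespace Matrix

variable {R : Type*} [CommRing R] {ι κ : Type*} [Fintype ι] [Fintype κ]

theorem dotProduct_mulVec_comm_of_isSymm {A : Matrix ι ι R} (hA : A.IsSymm) (x y : ι → R) :
    x ⬝ᵥ A *ᵥ y = y ⬝ᵥ A *ᵥ x := by
  rw [dotProduct_mulVec, ← mulVec_transpose, hA.eq, dotProduct_comm]

theorem add_mulVec_dotProduct_mulVec_add {A : Matrix ι ι R} (hA : A.IsSymm) (P : Matrix ι κ R)
    (x : ι → R) (u : κ → R) :
    (x + P *ᵥ u) ⬝ᵥ A *ᵥ (x + P *ᵥ u)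
      = x ⬝ᵥ A *ᵥ x + 2 * (Pᵀ *ᵥ A *ᵥ x) ⬝ᵥ u + u ⬝ᵥ (Pᵀ * A * P) *ᵥ u := by
  have hcross : P *ᵥ u ⬝ᵥ A *ᵥ x = (Pᵀ *ᵥ A *ᵥ x) ⬝ᵥ u := by
    rw [dotProduct_comm, dotProduct_mulVec, ← mulVec_transpose]
  have hquad : P *ᵥ u ⬝ᵥ A *ᵥ P *ᵥ u = u ⬝ᵥ (Pᵀ * A * P) *ᵥ u := by
    rw [← mulVec_mulVec, ← mulVec_mulVec, dotProduct_mulVec u Pᵀ, vecMul_transpose]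
  rw [mulVec_add, dotProduct_add, add_dotProduct, add_dotProduct,
    dotProduct_mulVec_comm_of_isSymm hA x (P *ᵥ u), hcross, hquad]
  ring

theorem dotProduct_mulVec_eq_of_sub_eq_mulVec {A K : Matrix ι ι R} (hA : A.IsSymm)
    {x y v : ι → R} (hK : (A *ᵥ (x + y)) ᵥ* K = 0) (hy : y - x = K *ᵥ v) :
    y ⬝ᵥ A *ᵥ y = x ⬝ᵥ A *ᵥ x := by
  have hpolar : y ⬝ᵥ A *ᵥ y - x ⬝ᵥ A *ᵥ x = (A *ᵥ (x + y)) ⬝ᵥ (y - x) := by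
    simp only [mulVec_add, add_dotProduct, dotProduct_sub, dotProduct_comm (A *ᵥ _)]
    rw [dotProduct_mulVec_comm_of_isSymm hA x y]
    ring
  rw [← sub_eq_zero, hpolar, hy, dotProduct_mulVec, hK, zero_dotProduct]

theorem inner_add_toEuclideanLin_add [DecidableEq ι] {d : ℕ} {A : Matrix ι ι ℝ} (hA : A.IsSymm)
    (P : Matrix ι (Fin d) ℝ) (x : EuclideanSpace ℝ ι) (u : EuclideanSpace ℝ (Fin d)) :
    ⟪x + toEuclideanLin P u, toEuclideanLin A (x + toEuclideanLin P u)⟫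
      = ⟪x, toEuclideanLin A x⟫ + 2 * ⟪toEuclideanLin (Pᵀ * A) x, u⟫
        + ⟪u, toEuclideanLin (Pᵀ * A * P) u⟫ := by
  simp only [EuclideanSpace.inner_eq_star_dotProduct, star_trivial, WithLp.ofLp_add,
    ofLp_toLpLin]
  simpa [dotProduct_comm _ (A *ᵥ _), dotProduct_comm _ ((_ * _) *ᵥ _), mulVec_mulVec,
    Matrix.mul_assoc] using add_mulVec_dotProduct_mulVec_add hA P x.ofLp u.ofLp

end Matrix

theorem MeasureTheory.MemLp.integrable_inner {Ω E : Type*} [MeasurableSpace Ω] {μ : Measure Ω}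
    [NormedAddCommGroup E] [InnerProductSpace ℝ E] {f g : Ω → E}
    (hf : MemLp f 2 μ) (hg : MemLp g 2 μ) : Integrable (fun ω => ⟪f ω, g ω⟫) μ := by
  refine memLp_one_iff_integrable.mp (hf.of_bilin (fun x y => ⟪x, y⟫) 1 hg
    (hf.1.inner hg.1) (.of_forall fun ω => ?_))
  simpa using nnnorm_inner_le_nnnorm (𝕜 := ℝ) (f ω) (g ω)

theorem MeasureTheory.MemLp.toEuclideanLin {Ω ι κ : Type*} [MeasurableSpace Ω] {μ : Measure Ω}
    [Fintype ι] [Fintype κ] [DecidableEq κ] {p : ENNReal} {Z : Ω → EuclideanSpace ℝ κ}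
    (hZ : MemLp Z p μ) (M : Matrix ι κ ℝ) : MemLp (fun ω => Matrix.toEuclideanLin M (Z ω)) p μ := by
  simpa using
    hZ.continuousLinearMap_comp (LinearMap.toContinuousLinearMap (Matrix.toEuclideanLin M))

theorem ProbabilityTheory.IndepFun.integral_inner_eq_zero {Ω E : Type*} [MeasurableSpace Ω]
    {μ : Measure Ω} [NormedAddCommGroup E] [InnerProductSpace ℝ E] [CompleteSpace E]
    [MeasurableSpace E] [BorelSpace E] {W ζ : Ω → E} (h : IndepFun W ζ μ)
    (hW : Integrable W μ) (hζ : Integrable ζ μ) (hζ0 : ∫ ω, ζ ω ∂μ = 0) :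
    ∫ ω, ⟪W ω, ζ ω⟫ ∂μ = 0 :=
  (h.integral_bilin hW hζ (innerSL ℝ)).trans (by simp [hζ0])

namespace IsCenteredGaussianVec

variable {Ω : Type*} [MeasurableSpace Ω] {μ : Measure Ω} {d : ℕ} {s : ℝ}
  {ξ : Ω → EuclideanSpace ℝ (Fin d)}

theorem measurable_inner (hξ : IsCenteredGaussianVec μ d s ξ) (t : EuclideanSpace ℝ (Fin d)) :
    Measurable fun ω => ⟪t, ξ ω⟫ :=
  measurable_const.inner hξ.1

theorem memLp_inner (hξ : IsCenteredGaussianVec μ d s ξ) (t : EuclideanSpace ℝ (Fin d)) :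
    MemLp (fun ω => ⟪t, ξ ω⟫) 2 μ := by
  have h : MemLp id 2 (μ.map fun ω => ⟪t, ξ ω⟫) := by
    rw [hξ.2 t]; exact memLp_id_gaussianReal 2
  exact (memLp_map_measure_iff aestronglyMeasurable_id (hξ.measurable_inner t).aemeasurable).mp h

theorem integral_inner (hξ : IsCenteredGaussianVec μ d s ξ) (t : EuclideanSpace ℝ (Fin d)) :
    ∫ ω, ⟪t, ξ ω⟫ ∂μ = 0 := by
  rw [← integral_map (f := fun x : ℝ => x) (hξ.measurable_inner t).aemeasurable
    aestronglyMeasurable_id, hξ.2 t, integral_id_gaussianReal]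

theorem integral_inner_sq (hs : 0 ≤ s) (hξ : IsCenteredGaussianVec μ d s ξ)
    (t : EuclideanSpace ℝ (Fin d)) : ∫ ω, ⟪t, ξ ω⟫ ^ 2 ∂μ = s * ‖t‖ ^ 2 := by
  rw [← variance_of_integral_eq_zero (hξ.measurable_inner t).aemeasurable (hξ.integral_inner t),
    ← variance_id_map (hξ.measurable_inner t).aemeasurable, hξ.2 t, variance_id_gaussianReal,
    Real.coe_toNNReal _ (by positivity)]

theorem integral_inner_mul_inner (hs : 0 ≤ s) (hξ : IsCenteredGaussianVec μ d s ξ)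
    (t t' : EuclideanSpace ℝ (Fin d)) : ∫ ω, ⟪t, ξ ω⟫ * ⟪t', ξ ω⟫ ∂μ = s * ⟪t, t'⟫ := by
  have polar : ∀ ω, ⟪t, ξ ω⟫ * ⟪t', ξ ω⟫ = (⟪t + t', ξ ω⟫ ^ 2 - ⟪t - t', ξ ω⟫ ^ 2) / 4 := by
    intro ω; rw [inner_add_left, inner_sub_left]; ring
  simp_rw [polar]
  rw [integral_div, integral_sub (hξ.memLp_inner _).integrable_sq (hξ.memLp_inner _).integrable_sq,
    integral_inner_sq hs hξ, integral_inner_sq hs hξ, norm_add_sq_real, norm_sub_sq_real]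
  ring

theorem integral_apply_mul_apply (hs : 0 ≤ s) (hξ : IsCenteredGaussianVec μ d s ξ) (i j : Fin d) :
    ∫ ω, ξ ω i * ξ ω j ∂μ = if i = j then s else 0 := by
  have := hξ.integral_inner_mul_inner hs (EuclideanSpace.single i 1) (EuclideanSpace.single j 1)
  simpa [EuclideanSpace.inner_single_left, PiLp.single_apply, eq_comm] using this

theorem memLp_apply (hξ : IsCenteredGaussianVec μ d s ξ) (i : Fin d) :
    MemLp (fun ω => ξ ω i) 2 μ := by
  simpa [EuclideanSpace.inner_single_left] using hξ.memLp_inner (EuclideanSpace.single i 1)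

theorem memLp_two (hξ : IsCenteredGaussianVec μ d s ξ) : MemLp ξ 2 μ :=
  memLp_piLp_iff.mpr hξ.memLp_apply

theorem integral_eq_zero [IsFiniteMeasure μ] (hξ : IsCenteredGaussianVec μ d s ξ) :
    ∫ ω, ξ ω ∂μ = 0 := by
  rw [← inner_self_eq_zero (𝕜 := ℝ), ← _root_.integral_inner (hξ.memLp_two.integrable one_le_two),
    hξ.integral_inner]

theorem integral_inner_toEuclideanLin (hs : 0 ≤ s) (hξ : IsCenteredGaussianVec μ d s ξ)
    (M : Matrix (Fin d) (Fin d) ℝ) :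
    ∫ ω, ⟪ξ ω, toEuclideanLin M (ξ ω)⟫ ∂μ = s * M.trace := by
  have hexpand : ∀ ω, ⟪ξ ω, toEuclideanLin M (ξ ω)⟫ = ∑ i, ∑ j, M i j * (ξ ω j * ξ ω i) := by
    intro ω
    simp [EuclideanSpace.inner_eq_star_dotProduct, dotProduct, mulVec, Finset.sum_mul, mul_assoc]
  have hint : ∀ i j, Integrable (fun ω => M i j * (ξ ω j * ξ ω i)) μ := fun i j =>
    ((hξ.memLp_apply j).integrable_mul (hξ.memLp_apply i)).const_mul _
  simp_rw [hexpand]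
  rw [integral_finsetSum _ fun i _ => integrable_finsetSum _ fun j _ => hint i j]
  simp_rw [integral_finsetSum _ fun j _ => hint _ j, integral_const_mul,
    hξ.integral_apply_mul_apply hs]
  simp [Matrix.trace, Finset.mul_sum, mul_comm]

end IsCenteredGaussianVec

theorem integral_inner_toEuclideanLin_add_gaussian {Ω : Type*} [MeasurableSpace Ω]
    {μ : Measure Ω} [IsProbabilityMeasure μ] {ι : Type*} [Fintype ι] [DecidableEq ι] {d : ℕ}
    {s : ℝ} {A : Matrix ι ι ℝ} (hA : A.IsSymm) (P : Matrix ι (Fin d) ℝ)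
    {Z : Ω → EuclideanSpace ℝ ι} {ζ : Ω → EuclideanSpace ℝ (Fin d)} (hs : 0 ≤ s)
    (hZ : MemLp Z 2 μ) (hζ : IsCenteredGaussianVec μ d s ζ) (hZζ : IndepFun Z ζ μ) :
    ∫ ω, ⟪Z ω + toEuclideanLin P (ζ ω), toEuclideanLin A (Z ω + toEuclideanLin P (ζ ω))⟫ ∂μ
      = ∫ ω, ⟪Z ω, toEuclideanLin A (Z ω)⟫ ∂μ + s * (Pᵀ * A * P).trace := by
  have hWζ : IndepFun (fun ω => toEuclideanLin (Pᵀ * A) (Z ω)) ζ μ :=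
    hZζ.comp (LinearMap.continuous_of_finiteDimensional _).measurable measurable_id
  have hW : Integrable (fun ω => toEuclideanLin (Pᵀ * A) (Z ω)) μ :=
    (hZ.toEuclideanLin _).integrable one_le_two
  have hζint : Integrable ζ μ := hζ.memLp_two.integrable one_le_two
  have hQ : Integrable (fun ω => ⟪Z ω, toEuclideanLin A (Z ω)⟫) μ :=
    hZ.integrable_inner (hZ.toEuclideanLin A)
  have hcross : Integrable (fun ω => 2 * ⟪toEuclideanLin (Pᵀ * A) (Z ω), ζ ω⟫) μ :=
    (hWζ.integrable_bilin hW hζint (innerSL ℝ)).const_mul 2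
  have hquad : Integrable (fun ω => ⟪ζ ω, toEuclideanLin (Pᵀ * A * P) (ζ ω)⟫) μ :=
    hζ.memLp_two.integrable_inner (hζ.memLp_two.toEuclideanLin _)
  simp_rw [inner_add_toEuclideanLin_add hA]
  rw [integral_add (by exact hQ.add hcross) hquad, integral_add hQ hcross, integral_const_mul,
    hWζ.integral_inner_eq_zero hW hζint hζ.integral_eq_zero, hζ.integral_inner_toEuclideanLin hs]
  ring

noncomputable def padMatrix (R : Type*) [Zero R] [One R] (m : ℕ) :
    Matrix (Fin (m + m)) (Fin m) R :=
  (1 : Matrix (Fin (m + m)) (Fin (m + m)) R).submatrix id (Fin.castAdd m)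

section padMatrix

variable {R : Type*} [CommRing R] {m : ℕ}

theorem padMatrix_mulVec (v : Fin m → R) : padMatrix R m *ᵥ v = Fin.append v 0 := by
  ext i
  refine Fin.addCases (fun j => ?_) (fun j => ?_) i
  · simp [padMatrix, mulVec, dotProduct, one_apply]
  · simp only [Fin.append_right, Pi.zero_apply, mulVec, dotProduct]
    refine Finset.sum_eq_zero fun k _ => ?_
    simp [padMatrix, one_apply, Fin.ext_iff]
    omega

theorem padMatrix_transpose_mul_mul (A : Matrix (Fin (m + m)) (Fin (m + m)) R) :
    (padMatrix R m)ᵀ * A * padMatrix R m = A.submatrix (Fin.castAdd m) (Fin.castAdd m) := by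
  ext i j
  simp [padMatrix, mul_apply, one_apply]

end padMatrix

theorem pad_toEuclideanLin {m d : ℕ} (Sig : Matrix (Fin m) (Fin d) ℝ)
    (u : EuclideanSpace ℝ (Fin d)) :
    pad m (toEuclideanLin Sig u) = toEuclideanLin (padMatrix ℝ m * Sig) u := by
  show WithLp.toLp 2 (Fin.append (Sig *ᵥ u.ofLp) 0)
    = WithLp.toLp 2 ((padMatrix ℝ m * Sig) *ᵥ u.ofLp)
  rw [← mulVec_mulVec, padMatrix_mulVec]

theorem quadCas_eq_dotProduct {m : ℕ} (A : Matrix (Fin (m + m)) (Fin (m + m)) ℝ)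
    (x : EuclideanSpace ℝ (Fin (m + m))) :
    quadCas m A x = 1 / 2 * (x.ofLp ⬝ᵥ A *ᵥ x.ofLp) := by
  rw [quadCas, EuclideanSpace.inner_eq_star_dotProduct, star_trivial, dotProduct_comm]
  rfl

theorem quadCas_eq_of_midpoint_step {m : ℕ} {A : Matrix (Fin (m + m)) (Fin (m + m)) ℝ}
    (hA : A.IsSymm) {B : EuclideanSpace ℝ (Fin (m + m)) → Matrix (Fin (m + m)) (Fin (m + m)) ℝ}
    (hCasimir : ∀ x : EuclideanSpace ℝ (Fin (m + m)),
      vecMul (WithLp.equiv 2 (Fin (m + m) → ℝ) (toEuclideanLin A x)) (B x) = 0)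
    {h : ℝ} {x y g : EuclideanSpace ℝ (Fin (m + m))}
    (hy : y = x + h • toEuclideanLin (B ((2 : ℝ)⁻¹ • (x + y))) g) :
    quadCas m A y = quadCas m A x := by
  set c := (2 : ℝ)⁻¹ • (x + y)
  have hK : (A *ᵥ (x.ofLp + y.ofLp)) ᵥ* B c = 0 := by
    have hc : x.ofLp + y.ofLp = (2 : ℝ) • c.ofLp := by simp [c, smul_smul]
    simpa [hc, mulVec_smul, smul_vecMul] using congrArg ((2 : ℝ) • ·) (hCasimir c)
  have hstep : y.ofLp - x.ofLp = B c *ᵥ (h • g.ofLp) := by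
    rw [hy]; simp [mulVec_smul]
  rw [quadCas_eq_dotProduct, quadCas_eq_dotProduct,
    dotProduct_mulVec_eq_of_sub_eq_mulVec hA hK hstep]

theorem integral_quadCas_of_ae_eq_add_pad {Ω : Type*} [MeasurableSpace Ω] {μ : Measure Ω}
    [IsProbabilityMeasure μ] {m d : ℕ} {A : Matrix (Fin (m + m)) (Fin (m + m)) ℝ}
    (hA : A.IsSymm) (Sig : Matrix (Fin m) (Fin d) ℝ) {s : ℝ} (hs : 0 ≤ s)
    {Z W : Ω → EuclideanSpace ℝ (Fin (m + m))} {ζ : Ω → EuclideanSpace ℝ (Fin d)}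
    (hZ : MemLp Z 2 μ) (hζ : IsCenteredGaussianVec μ d s ζ) (hZζ : IndepFun Z ζ μ)
    (hW : ∀ᵐ ω ∂μ, W ω = Z ω + pad m (toEuclideanLin Sig (ζ ω))) :
    ∫ ω, quadCas m A (W ω) ∂μ = ∫ ω, quadCas m A (Z ω) ∂μ
      + s / 2 * (Sigᵀ * A.submatrix (Fin.castAdd m) (Fin.castAdd m) * Sig).trace := by
  have hP : (padMatrix ℝ m * Sig)ᵀ * A * (padMatrix ℝ m * Sig)
      = Sigᵀ * ((padMatrix ℝ m)ᵀ * A * padMatrix ℝ m) * Sig := by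
    simp only [transpose_mul, Matrix.mul_assoc]
  rw [integral_congr_ae (hW.mono fun ω hω => congrArg (quadCas m A) hω)]
  simp only [quadCas, pad_toEuclideanLin, integral_const_mul]
  rw [integral_inner_toEuclideanLin_add_gaussian hA _ hs hZ hζ hZζ, hP,
    padMatrix_transpose_mul_mul]
  ring

theorem drift_preserving_scheme_casimir_trace_formula_general
    (m d : ℕ) (h : ℝ) (hh : 0 < h)
    (Sig : Matrix (Fin m) (Fin d) ℝ)
    (B : EuclideanSpace ℝ (Fin (m + m)) → Matrix (Fin (m + m)) (Fin (m + m)) ℝ)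
    (V : EuclideanSpace ℝ (Fin m) → ℝ)
    (A : Matrix (Fin (m + m)) (Fin (m + m)) ℝ) (hA : A.IsSymm)
    (hCasimir : ∀ x : EuclideanSpace ℝ (Fin (m + m)),
      Matrix.vecMul (WithLp.equiv 2 (Fin (m + m) → ℝ) (Matrix.toEuclideanLin A x)) (B x) = 0)
    {Ω : Type*} [MeasurableSpace Ω] (μ : Measure Ω) [IsProbabilityMeasure μ]
    (X Y₁ Y₂ : ℕ → Ω → EuclideanSpace ℝ (Fin (m + m)))
    (ξ η : ℕ → Ω → EuclideanSpace ℝ (Fin d))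
    (hξ : ∀ n, IsCenteredGaussianVec μ d (h / 2) (ξ n))
    (hη : ∀ n, IsCenteredGaussianVec μ d (h / 2) (η n))
    (hXmeas : ∀ n, Measurable (X n)) (hY₂meas : ∀ n, Measurable (Y₂ n))
    (hXint : ∀ n, Integrable (fun ω => ‖X n ω‖ ^ 2) μ)
    (hY₂int : ∀ n, Integrable (fun ω => ‖Y₂ n ω‖ ^ 2) μ)
    (hξX : ∀ n, IndepFun (ξ n) (X n) μ)
    (hηrest : ∀ n, IndepFun (fun ω => (X n ω, ξ n ω, Y₂ n ω)) (η n) μ)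
    (hY₁rel : ∀ n, ∀ᵐ ω ∂μ, Y₁ n ω = X n ω + pad m (Matrix.toEuclideanLin Sig (ξ n ω)))
    (hY₂rel : ∀ n, ∀ᵐ ω ∂μ,
      Y₂ n ω = Y₁ n ω + h • (Matrix.toEuclideanLin (B ((2 : ℝ)⁻¹ • (Y₁ n ω + Y₂ n ω))))
        (∫ θ in (0 : ℝ)..1, gradient (Ham m V) (Y₁ n ω + θ • (Y₂ n ω - Y₁ n ω))))
    (hXrel : ∀ n, ∀ᵐ ω ∂μ,
      X (n + 1) ω = Y₂ n ω + pad m (Matrix.toEuclideanLin Sig (η n ω))) :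
    ∀ n : ℕ, ∫ ω, quadCas m A (X n ω) ∂μ
      = (∫ ω, quadCas m A (X 0 ω) ∂μ)
        + 1 / 2 * (Sigᵀ * A.submatrix (Fin.castAdd m) (Fin.castAdd m) * Sig).trace
          * (n * h) := by
  have hs : 0 ≤ h / 2 := by positivity
  have hXL2 n : MemLp (X n) 2 μ :=
    (memLp_two_iff_integrable_sq_norm (hXmeas n).aestronglyMeasurable).mpr (hXint n)
  have hY₂L2 n : MemLp (Y₂ n) 2 μ :=
    (memLp_two_iff_integrable_sq_norm (hY₂meas n).aestronglyMeasurable).mpr (hY₂int n)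
  have step n : ∫ ω, quadCas m A (X (n + 1) ω) ∂μ = ∫ ω, quadCas m A (X n ω) ∂μ
      + 1 / 2 * (Sigᵀ * A.submatrix (Fin.castAdd m) (Fin.castAdd m) * Sig).trace * h := by
    have hY₂η : IndepFun (Y₂ n) (η n) μ :=
      (hηrest n).comp (measurable_snd.comp measurable_snd) measurable_id
    have hcas : ∀ᵐ ω ∂μ, quadCas m A (Y₂ n ω) = quadCas m A (Y₁ n ω) :=
      (hY₂rel n).mono fun ω hω => quadCas_eq_of_midpoint_step hA hCasimir hω
    rw [integral_quadCas_of_ae_eq_add_pad hA Sig hs (hY₂L2 n) (hη n) hY₂η (hXrel n),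
      integral_congr_ae hcas,
      integral_quadCas_of_ae_eq_add_pad hA Sig hs (hXL2 n) (hξ n) (hξX n).symm (hY₁rel n)]
    ring
  intro n
  induction n with
  | zero => simp
  | succ n ih =>
    rw [step, ih]
    push_cast
    ring

/-- **trace formula for the quadratic Casimir of the drift-preserving
scheme.** If `C(x) = ½ xᵀ A x` is a Casimir, i.e. `(Ax)ᵀ B(x) = 0` for all `x`,
then the iterates of the drift-preserving scheme satisfy
`E[C(Xₙ)] = E[C(X₀)] + ½ Tr(Σᵀ a Σ) tₙ` with `tₙ = n h`, `a` the upper-left block of `A`. -/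
theorem drift_preserving_scheme_casimir_trace_formula
    (m d : ℕ) (hm : 0 < m) (hd : 0 < d) (h : ℝ) (hh : 0 < h)
    (Sig : Matrix (Fin m) (Fin d) ℝ)
    (B : EuclideanSpace ℝ (Fin (m + m)) → Matrix (Fin (m + m)) (Fin (m + m)) ℝ)
    (hBcont : Continuous B) (hBskew : ∀ x, (B x)ᵀ = -(B x))
    (V : EuclideanSpace ℝ (Fin m) → ℝ) (hV : ContDiff ℝ 1 V)
    (A : Matrix (Fin (m + m)) (Fin (m + m)) ℝ) (hA : A.IsSymm)
    (hCasimir : ∀ x : EuclideanSpace ℝ (Fin (m + m)),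
      Matrix.vecMul (WithLp.equiv 2 (Fin (m + m) → ℝ) (Matrix.toEuclideanLin A x)) (B x) = 0)
    {Ω : Type*} [MeasurableSpace Ω] (μ : Measure Ω) [IsProbabilityMeasure μ]
    (X Y₁ Y₂ : ℕ → Ω → EuclideanSpace ℝ (Fin (m + m)))
    (ξ η : ℕ → Ω → EuclideanSpace ℝ (Fin d))
    (hξ : ∀ n, IsCenteredGaussianVec μ d (h / 2) (ξ n))
    (hη : ∀ n, IsCenteredGaussianVec μ d (h / 2) (η n))
    -- the families `(ξₙ)` and `(ηₙ)` are mutually independent …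
    (hmutual : iIndepFun (Sum.elim ξ η) μ)
    -- … and independent of the initial value `X₀`
    (hX₀indep : IndepFun (X 0) (fun ω (k : ℕ ⊕ ℕ) => Sum.elim ξ η k ω) μ)
    (hXmeas : ∀ n, Measurable (X n)) (hY₂meas : ∀ n, Measurable (Y₂ n))
    (hXint : ∀ n, Integrable (fun ω => ‖X n ω‖ ^ 2) μ)
    (hY₂int : ∀ n, Integrable (fun ω => ‖Y₂ n ω‖ ^ 2) μ)
    (hξX : ∀ n, IndepFun (ξ n) (X n) μ)
    (hηrest : ∀ n, IndepFun (fun ω => (X n ω, ξ n ω, Y₂ n ω)) (η n) μ)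
    (hY₁rel : ∀ n, ∀ᵐ ω ∂μ, Y₁ n ω = X n ω + pad m (Matrix.toEuclideanLin Sig (ξ n ω)))
    (hY₂rel : ∀ n, ∀ᵐ ω ∂μ,
      Y₂ n ω = Y₁ n ω + h • (Matrix.toEuclideanLin (B ((2 : ℝ)⁻¹ • (Y₁ n ω + Y₂ n ω))))
        (∫ θ in (0 : ℝ)..1, gradient (Ham m V) (Y₁ n ω + θ • (Y₂ n ω - Y₁ n ω))))
    (hXrel : ∀ n, ∀ᵐ ω ∂μ,
      X (n + 1) ω = Y₂ n ω + pad m (Matrix.toEuclideanLin Sig (η n ω))) :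
    ∀ n : ℕ, ∫ ω, quadCas m A (X n ω) ∂μ
      = (∫ ω, quadCas m A (X 0 ω) ∂μ)
        + 1 / 2 * (Sigᵀ * A.submatrix (Fin.castAdd m) (Fin.castAdd m) * Sig).trace
          * (n * h) :=
  drift_preserving_scheme_casimir_trace_formula_general m d h hh Sig B V A hA hCasimir μ X Y₁ Y₂ ξ η
    hξ hη hXmeas hY₂meas hXint hY₂int hξX hηrest hY₁rel hY₂rel hXrel
end
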